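/- For any border edge m of a triangulated convex polygon, there are exactly three ways to extend the polygon by one vertex at m together with a new diagonal close to the border over the two new boundary edges: the new diagonal can be placed so that the new triangle is glued in one of three combinatorially distinct configurations relative to the triangle of Δ containing m. -/

import Mathlib

namespace CTA

/-- `x` lies strictly between `a` and `b` going anticlockwise around the `m`-gon. -/
def Btw (m : ℕ) (a x b : ZMod m) : Prop :=
  0 < (x - a).val ∧ (x - a).val < (b - a).val

/-- `p` is a diagonal of the convex `m`-gon: its endpoints are distinct and non-adjacent. -/
def IsPolyDiag (m : ℕ) (p : Sym2 (ZMod m)) : Prop :=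
  ∀ a b : ZMod m, p = s(a, b) → 2 ≤ (b - a).val ∧ 2 ≤ (a - b).val

/-- Two diagonals cross (intersect in an interior point of both). -/
def Crosses (m : ℕ) (p q : Sym2 (ZMod m)) : Prop :=
  ∃ a b c d : ZMod m, p = s(a, b) ∧ q = s(c, d) ∧ Btw m a c b ∧ Btw m b d a

/-- A triangulation: a maximal set of pairwise non-crossing diagonals. -/
def IsTriangulation (m : ℕ) (Δ : Set (Sym2 (ZMod m))) : Prop :=
  (∀ p ∈ Δ, IsPolyDiag m p) ∧
  (∀ p ∈ Δ, ∀ q ∈ Δ, ¬ Crosses m p q) ∧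
  ∀ Δ' : Set (Sym2 (ZMod m)), Δ ⊆ Δ' → (∀ p ∈ Δ', IsPolyDiag m p) →
    (∀ p ∈ Δ', ∀ q ∈ Δ', ¬ Crosses m p q) → Δ' = Δ

/-- A diagonal is close to the border if its endpoints are at boundary distance exactly 2. -/
def CloseBorder (m : ℕ) (p : Sym2 (ZMod m)) : Prop :=
  ∃ a b : ZMod m, p = s(a, b) ∧ min (b - a).val (a - b).val = 2

/-- Rotation of a triangulation by `k` vertices. -/
def rotate (m : ℕ) (k : ZMod m) (Δ : Set (Sym2 (ZMod m))) : Set (Sym2 (ZMod m)) :=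
  Sym2.map (· + k) '' Δ

/-- The orbit of a triangulation under the rotation action of `ZMod m`. -/
def rotOrbit (m : ℕ) (Δ : Set (Sym2 (ZMod m))) : Set (Set (Sym2 (ZMod m))) :=
  {Δ' | ∃ k : ZMod m, Δ' = rotate m k Δ}

/-- The number of orbits of the rotation action on triangulations of the `m`-gon. -/
noncomputable def numOrbits (m : ℕ) : ℕ :=
  Nat.card {O : Set (Set (Sym2 (ZMod m))) // ∃ Δ, IsTriangulation m Δ ∧ O = rotOrbit m Δ}

/-- The `n`-th Catalan number `(2n)!/((n+1)!·n!)`. -/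
def catalanC (n : ℕ) : ℕ :=
  Nat.factorial (2 * n) / (Nat.factorial (n + 1) * Nat.factorial n)

/-- The diagonal close to the border cutting off the vertex `v`. -/
def cutDiag (m : ℕ) (v : ZMod m) : Sym2 (ZMod m) := s(v - 1, v + 1)

/-- Deleting the vertex `v` from the `(m+1)`-gon: the order-preserving relabelling of the
remaining vertices by `ZMod m`. -/
def delVtx (m : ℕ) (v : ZMod (m + 1)) (x : ZMod (m + 1)) : ZMod m :=
  if x.val < v.val then (x.val : ZMod m) else ((x.val - 1 : ℕ) : ZMod m)

/-- Inserting a new vertex on the border edge between `a` and `a+1`: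
the induced relabelling of old vertices into `ZMod (m+1)`. -/
def insVtx (m : ℕ) (a : ZMod m) (x : ZMod m) : ZMod (m + 1) :=
  if x.val ≤ a.val then (x.val : ZMod (m + 1)) else ((x.val + 1 : ℕ) : ZMod (m + 1))

/-- Factoring out the close-to-the-border diagonal cutting off the vertex `v`:
the diagonal becomes a border edge of the smaller polygon, all other diagonals unchanged. -/
def contract (m : ℕ) (v : ZMod (m + 1)) (Δ : Set (Sym2 (ZMod (m + 1)))) :
    Set (Sym2 (ZMod m)) :=
  Sym2.map (delVtx m v) '' (Δ \ {cutDiag (m + 1) v})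

/-- An edge of the triangulated polygon: a diagonal of `Δ` or a border edge. -/
def IsEdge (m : ℕ) (Δ : Set (Sym2 (ZMod m))) (p : Sym2 (ZMod m)) : Prop :=
  p ∈ Δ ∨ ∃ a : ZMod m, p = s(a, a + 1)

/-- The arrow relation of the quiver `Q_Δ`: an arrow `p → q` when the diagonals `p` and `q`
bound a common triangle of `Δ` and `q` is obtained from `p` by anticlockwise rotation about
their common endpoint. -/
def Arrow (m : ℕ) (Δ : Set (Sym2 (ZMod m))) (p q : Sym2 (ZMod m)) : Prop :=
  p ∈ Δ ∧ q ∈ Δ ∧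
    ∃ a b c : ZMod m, p = s(a, b) ∧ q = s(a, c) ∧ IsEdge m Δ s(b, c) ∧ Btw m b c a

/-- Fomin–Zelevinsky mutation of an arrow relation (quiver with no loops, no 2-cycles and
no multiple arrows) at the vertex `k`. -/
def mutArrow (m : ℕ) (A : Sym2 (ZMod m) → Sym2 (ZMod m) → Prop) (k p q : Sym2 (ZMod m)) :
    Prop :=
  (p = k ∧ A q k) ∨
  (p ≠ k ∧ q = k ∧ A k p) ∨
  (p ≠ k ∧ q ≠ k ∧
    ((A p k ∧ A k q ∧ ¬ A q p) ∨ (A p q ∧ ¬ (A q k ∧ A k p))))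


/-!
A triangulation `P` of the `(m+1)`-gon containing the ear `cutDiag (m + 1) v` is determined by
its contraction at `v`: no other diagonal of `P` ends at `v` (it would cross the ear), and
deleting `v` relabels the remaining vertices order-preservingly, so crossings and diagonals
correspond, except that the ear itself becomes a border edge. Conversely, lifting a
triangulation `Δ` of the `m`-gon and adding the ear at `v` always gives such a `P`. Hence the
extensions are in bijection with the admissible vertices `v`, here the new vertex and its two
neighbours.
-/

instance (M : ℕ) (a x b : ZMod M) : Decidable (Btw M a x b) :=
  inferInstanceAs (Decidable (_ ∧ _))

section ZModArith

variable {M : ℕ} [NeZero M]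

theorem val_sub_eq_ite (x y : ZMod M) :
    (y - x).val = if x.val ≤ y.val then y.val - x.val else M + y.val - x.val := by
  split_ifs with h
  · exact ZMod.val_sub h
  · have hx := ZMod.val_lt x
    have hsub : y - x = ((M + y.val - x.val : ℕ) : ZMod M) := by
      rw [Nat.cast_sub (by omega), Nat.cast_add, ZMod.natCast_self, ZMod.natCast_zmod_val,
        ZMod.natCast_zmod_val, zero_add]
    rw [hsub, ZMod.val_cast_of_lt (by omega)]

theorem val_sub_add_val_sub {x y : ZMod M} (h : x ≠ y) : (y - x).val + (x - y).val = M := by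
  have hne : x.val ≠ y.val := fun hv => h (ZMod.val_injective M hv)
  have := ZMod.val_lt x
  have := ZMod.val_lt y
  rw [val_sub_eq_ite, val_sub_eq_ite]
  split_ifs <;> omega

theorem eq_add_of_val_sub_eq {x y : ZMod M} {k : ℕ} (h : (y - x).val = k) : y = x + k := by
  rw [← h, ZMod.natCast_zmod_val, add_sub_cancel]

theorem Btw.eq_of_sub_one_add_one {v c : ZMod M} (h : Btw M (v - 1) c (v + 1)) : c = v := by
  obtain ⟨hpos, hlt⟩ := h
  have h2 : (v + 1 - (v - 1)).val ≤ 2 := by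
    rw [show v + 1 - (v - 1) = ((2 : ℕ) : ZMod M) by push_cast; ring, ZMod.val_natCast]
    exact Nat.mod_le _ _
  have hc := eq_add_of_val_sub_eq (show (c - (v - 1)).val = 1 by omega)
  rw [hc]
  push_cast
  ring

end ZModArith

theorem Crosses.symm {M : ℕ} [NeZero M] {p q : Sym2 (ZMod M)} (h : Crosses M p q) :
    Crosses M q p := by
  obtain ⟨a, b, c, d, hp, hq, hc, hd⟩ := h
  refine ⟨c, d, b, a, hq, hp.trans Sym2.eq_swap, ?_, ?_⟩ <;>
  · unfold Btw at hc hd ⊢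
    have := ZMod.val_lt a
    have := ZMod.val_lt b
    have := ZMod.val_lt c
    have := ZMod.val_lt d
    simp only [val_sub_eq_ite] at hc hd ⊢
    split_ifs at hc hd ⊢ <;> omega

theorem not_crosses_self (M : ℕ) (p : Sym2 (ZMod M)) : ¬ Crosses M p p := by
  rintro ⟨a, b, c, d, hab, hcd, hc, hd⟩
  rcases Sym2.eq_iff.1 (hab.symm.trans hcd) with ⟨rfl, rfl⟩ | ⟨rfl, rfl⟩
  · simp [Btw] at hc
  · exact lt_irrefl _ hc.2

theorem isPolyDiag_mk_iff {M : ℕ} {x y : ZMod M} :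
    IsPolyDiag M s(x, y) ↔ 2 ≤ (y - x).val ∧ 2 ≤ (x - y).val := by
  refine ⟨fun h => h x y rfl, fun h a b hab => ?_⟩
  rcases Sym2.eq_iff.1 hab with ⟨rfl, rfl⟩ | ⟨rfl, rfl⟩
  exacts [h, h.symm]

theorem IsTriangulation.mem_of_not_crosses {M : ℕ} {Δ : Set (Sym2 (ZMod M))}
    (hΔ : IsTriangulation M Δ) {p : Sym2 (ZMod M)} (hp : IsPolyDiag M p)
    (hpq : ∀ q ∈ Δ, ¬ Crosses M p q) (hqp : ∀ q ∈ Δ, ¬ Crosses M q p) : p ∈ Δ := by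
  have hmax := hΔ.2.2 (insert p Δ) (Set.subset_insert p Δ)
    (Set.forall_mem_insert.2 ⟨hp, hΔ.1⟩)
    (Set.forall_mem_insert.2 ⟨Set.forall_mem_insert.2 ⟨not_crosses_self M p, hpq⟩,
      fun q hq => Set.forall_mem_insert.2 ⟨hqp q hq, hΔ.2.1 q hq⟩⟩)
  exact hmax ▸ Set.mem_insert p Δ

theorem val_cutDiag_sub {M : ℕ} (hM : 3 ≤ M) (v : ZMod M) : (v + 1 - (v - 1)).val = 2 := by
  rw [show v + 1 - (v - 1) = ((2 : ℕ) : ZMod M) by push_cast; ring,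
    ZMod.val_cast_of_lt (by omega)]

theorem btw_sub_one_self_add_one {M : ℕ} (hM : 3 ≤ M) (v : ZMod M) :
    Btw M (v - 1) v (v + 1) := by
  rw [Btw, val_cutDiag_sub hM, sub_sub_cancel, ZMod.val_one'' (by omega)]
  omega

section CutDiag

variable {M : ℕ} [NeZero M]

theorem isPolyDiag_cutDiag (hM : 4 ≤ M) (v : ZMod M) : IsPolyDiag M (cutDiag M v) := by
  have hwidth := val_cutDiag_sub (by omega) v
  have hne : v + 1 ≠ v - 1 := fun h => by
    rw [h, sub_self, ZMod.val_zero] at hwidth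
    omega
  have := val_sub_add_val_sub hne
  exact isPolyDiag_mk_iff.2 ⟨by omega, by omega⟩

theorem closeBorder_cutDiag (hM : 4 ≤ M) (v : ZMod M) : CloseBorder M (cutDiag M v) := by
  have h := isPolyDiag_mk_iff.1 (isPolyDiag_cutDiag hM v)
  exact ⟨v - 1, v + 1, rfl, by rw [val_cutDiag_sub (by omega) v]; omega⟩

theorem crosses_cutDiag {v w : ZMod M} (h : IsPolyDiag M s(v, w)) :
    Crosses M s(v, w) (cutDiag M v) := by
  obtain ⟨hwv, hvw⟩ := isPolyDiag_mk_iff.1 h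
  have hM : 1 < M := by have := ZMod.val_lt (w - v); omega
  have hone : (1 : ZMod M).val = 1 := ZMod.val_one'' (by omega)
  have hsub : (v - 1 - w).val = (v - w).val - 1 := by
    rw [sub_right_comm, ZMod.val_sub (by omega), hone]
  refine ⟨w, v, v - 1, v + 1, Sym2.eq_swap, rfl, ⟨?_, ?_⟩, ⟨?_, ?_⟩⟩
  · omega
  · omega
  · rw [add_sub_cancel_left, hone]; omega
  · rw [add_sub_cancel_left, hone]; omega

theorem not_crosses_cutDiag {v : ZMod M} {q : Sym2 (ZMod M)} (hq : ∀ x ∈ q, x ≠ v) :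
    ¬ Crosses M (cutDiag M v) q := by
  rintro ⟨a, b, c, d, hab, rfl, hc, hd⟩
  rcases Sym2.eq_iff.1 hab with ⟨rfl, rfl⟩ | ⟨rfl, rfl⟩
  · exact hq c (Sym2.mem_mk_left c d) hc.eq_of_sub_one_add_one
  · exact hq d (Sym2.mem_mk_right c d) hd.eq_of_sub_one_add_one

theorem ne_of_not_crosses_cutDiag {v : ZMod M} {q : Sym2 (ZMod M)} (hq : IsPolyDiag M q)
    (hcross : ¬ Crosses M q (cutDiag M v)) : ∀ x ∈ q, x ≠ v := by
  rintro x hx rfl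
  obtain ⟨w, rfl⟩ := Sym2.mem_iff_exists.1 hx
  exact hcross (crosses_cutDiag hq)

end CutDiag

/-- The inverse of `delVtx m v` on the vertices other than `v`. -/
def liftVtx (m : ℕ) (v : ZMod (m + 1)) (y : ZMod m) : ZMod (m + 1) :=
  if y.val < v.val then (y.val : ZMod (m + 1)) else ((y.val + 1 : ℕ) : ZMod (m + 1))

section LiftVtx

variable {m : ℕ} [NeZero m] (v : ZMod (m + 1))

theorem val_liftVtx (y : ZMod m) :
    (liftVtx m v y).val = if y.val < v.val then y.val else y.val + 1 := by
  have := ZMod.val_lt y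
  unfold liftVtx
  split_ifs <;> exact ZMod.val_cast_of_lt (by omega)

theorem val_delVtx (x : ZMod (m + 1)) :
    (delVtx m v x).val = if x.val < v.val then x.val else x.val - 1 := by
  have := ZMod.val_lt x
  have := ZMod.val_lt v
  have := NeZero.pos m
  unfold delVtx
  split_ifs <;> exact ZMod.val_cast_of_lt (by omega)

theorem liftVtx_ne (y : ZMod m) : liftVtx m v y ≠ v := by
  intro h
  have := congrArg ZMod.val h
  rw [val_liftVtx] at this
  split_ifs at this <;> omega

theorem delVtx_liftVtx (y : ZMod m) : delVtx m v (liftVtx m v y) = y := by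
  apply ZMod.val_injective
  have := ZMod.val_lt y
  rw [val_delVtx, val_liftVtx]
  split_ifs <;> omega

theorem liftVtx_delVtx {x : ZMod (m + 1)} (hx : x ≠ v) : liftVtx m v (delVtx m v x) = x := by
  apply ZMod.val_injective
  have hne : x.val ≠ v.val := fun h => hx (ZMod.val_injective _ h)
  rw [val_liftVtx, val_delVtx]
  split_ifs <;> omega

theorem btw_liftVtx_iff (x y z : ZMod m) :
    Btw (m + 1) (liftVtx m v x) (liftVtx m v y) (liftVtx m v z) ↔ Btw m x y z := by
  have := ZMod.val_lt x
  have := ZMod.val_lt y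
  have := ZMod.val_lt z
  unfold Btw
  simp only [val_sub_eq_ite, val_liftVtx]
  split_ifs <;> omega

theorem val_liftVtx_sub (x y : ZMod m) :
    (liftVtx m v y - liftVtx m v x).val =
      (y - x).val + if Btw (m + 1) (liftVtx m v x) v (liftVtx m v y) then 1 else 0 := by
  have := ZMod.val_lt x
  have := ZMod.val_lt y
  have := ZMod.val_lt v
  unfold Btw
  simp only [val_sub_eq_ite, val_liftVtx]
  split_ifs <;> omega

end LiftVtx

theorem _root_.Sym2.exists_eq_mk_of_map_eq_mk {α β : Type*} {f : α → β} {p : Sym2 α}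
    {A B : β} (h : Sym2.map f p = s(A, B)) : ∃ a b, p = s(a, b) ∧ f a = A ∧ f b = B := by
  induction p using Sym2.ind with
  | _ a b =>
    rcases Sym2.eq_iff.1 h with ⟨ha, hb⟩ | ⟨ha, hb⟩
    · exact ⟨a, b, rfl, ha, hb⟩
    · exact ⟨b, a, Sym2.eq_swap, hb, ha⟩

section LiftDiag

variable {m : ℕ} [NeZero m] (v : ZMod (m + 1))

theorem map_delVtx_map_liftVtx (p : Sym2 (ZMod m)) :
    Sym2.map (delVtx m v) (Sym2.map (liftVtx m v) p) = p := by
  induction p using Sym2.ind with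
  | _ x y => simp only [Sym2.map_mk, delVtx_liftVtx]

theorem map_liftVtx_map_delVtx {p : Sym2 (ZMod (m + 1))} (hp : ∀ x ∈ p, x ≠ v) :
    Sym2.map (liftVtx m v) (Sym2.map (delVtx m v) p) = p := by
  induction p using Sym2.ind with
  | _ x y =>
    rw [Sym2.map_mk, Sym2.map_mk, liftVtx_delVtx v (hp x (Sym2.mem_mk_left x y)),
      liftVtx_delVtx v (hp y (Sym2.mem_mk_right x y))]

theorem crosses_map_liftVtx_iff (p q : Sym2 (ZMod m)) :
    Crosses (m + 1) (Sym2.map (liftVtx m v) p) (Sym2.map (liftVtx m v) q) ↔ Crosses m p q := by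
  constructor
  · rintro ⟨A, B, C, D, hp, hq, hC, hD⟩
    obtain ⟨a, b, rfl, rfl, rfl⟩ := Sym2.exists_eq_mk_of_map_eq_mk hp
    obtain ⟨c, d, rfl, rfl, rfl⟩ := Sym2.exists_eq_mk_of_map_eq_mk hq
    exact ⟨a, b, c, d, rfl, rfl, (btw_liftVtx_iff v a c b).1 hC, (btw_liftVtx_iff v b d a).1 hD⟩
  · rintro ⟨a, b, c, d, rfl, rfl, hc, hd⟩
    exact ⟨liftVtx m v a, liftVtx m v b, liftVtx m v c, liftVtx m v d, rfl, rfl,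
      (btw_liftVtx_iff v a c b).2 hc, (btw_liftVtx_iff v b d a).2 hd⟩

theorem eq_cutDiag_of_val_sub_lt_two {x y : ZMod m} (hxy : (y - x).val < 2)
    (hXY : 2 ≤ (liftVtx m v y - liftVtx m v x).val) :
    s(liftVtx m v x, liftVtx m v y) = cutDiag (m + 1) v := by
  have hlen := val_liftVtx_sub v x y
  generalize liftVtx m v x = X at *
  generalize liftVtx m v y = Y at *
  split_ifs at hlen with hv
  · obtain ⟨hpos, hlt⟩ := hv
    have hX := eq_add_of_val_sub_eq (show (v - X).val = 1 by omega)
    have hY := eq_add_of_val_sub_eq (show (Y - X).val = 2 by omega)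
    rw [cutDiag, hY, hX]
    congr 1 <;> push_cast <;> ring
  · omega

theorem isPolyDiag_iff_map_liftVtx (p : Sym2 (ZMod m)) :
    IsPolyDiag m p ↔
      IsPolyDiag (m + 1) (Sym2.map (liftVtx m v) p) ∧
        Sym2.map (liftVtx m v) p ≠ cutDiag (m + 1) v := by
  induction p using Sym2.ind with
  | _ x y =>
  rw [Sym2.map_mk, isPolyDiag_mk_iff, isPolyDiag_mk_iff]
  have hxy := val_liftVtx_sub v x y
  have hyx := val_liftVtx_sub v y x
  constructor
  · rintro ⟨h1, h2⟩
    have hm : 3 ≤ m := by have := ZMod.val_lt (y - x); omega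
    refine ⟨⟨by split_ifs at hxy <;> omega, by split_ifs at hyx <;> omega⟩, fun hcut => ?_⟩
    have hbtw := btw_sub_one_self_add_one (M := m + 1) (by omega) v
    rcases Sym2.eq_iff.1 hcut with ⟨hx, hy⟩ | ⟨hy, hx⟩
    · rw [hx, hy, if_pos hbtw, val_cutDiag_sub (by omega)] at hxy
      omega
    · rw [hx, hy, if_pos hbtw, val_cutDiag_sub (by omega)] at hyx
      omega
  · rintro ⟨⟨h1, h2⟩, hcut⟩
    refine ⟨not_lt.1 fun h => hcut (eq_cutDiag_of_val_sub_lt_two v h h1),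
      not_lt.1 fun h => hcut (Sym2.eq_swap.trans (eq_cutDiag_of_val_sub_lt_two v h h2))⟩

end LiftDiag

def extend (m : ℕ) (v : ZMod (m + 1)) (Δ : Set (Sym2 (ZMod m))) : Set (Sym2 (ZMod (m + 1))) :=
  insert (cutDiag (m + 1) v) (Sym2.map (liftVtx m v) '' Δ)

section Extend

variable {m : ℕ} [NeZero m] (v : ZMod (m + 1))

theorem ne_of_mem_map_liftVtx {p : Sym2 (ZMod m)} {x : ZMod (m + 1)}
    (hx : x ∈ Sym2.map (liftVtx m v) p) : x ≠ v := by
  obtain ⟨y, -, rfl⟩ := Sym2.mem_map.1 hx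
  exact liftVtx_ne v y

theorem contract_extend {Δ : Set (Sym2 (ZMod m))} (hΔ : ∀ p ∈ Δ, IsPolyDiag m p) :
    contract m v (extend m v Δ) = Δ := by
  have hcut : cutDiag (m + 1) v ∉ Sym2.map (liftVtx m v) '' Δ := by
    rintro ⟨p, hp, hpcut⟩
    exact ((isPolyDiag_iff_map_liftVtx v p).1 (hΔ p hp)).2 hpcut
  rw [contract, extend, Set.insert_sdiff_self_of_notMem hcut, Set.image_image]
  simp only [map_delVtx_map_liftVtx, Set.image_id']

theorem eq_extend_contract {P : Set (Sym2 (ZMod (m + 1)))}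
    (hdiag : ∀ p ∈ P, IsPolyDiag (m + 1) p)
    (hcross : ∀ p ∈ P, ∀ q ∈ P, ¬ Crosses (m + 1) p q) (hcut : cutDiag (m + 1) v ∈ P) :
    P = extend m v (contract m v P) := by
  have hlift : Sym2.map (liftVtx m v) '' contract m v P = P \ {cutDiag (m + 1) v} := by
    rw [contract, Set.image_image]
    refine (Set.image_congr fun p hp => map_liftVtx_map_delVtx v ?_).trans (Set.image_id' _)
    exact ne_of_not_crosses_cutDiag (hdiag p hp.1) (hcross p hp.1 _ hcut)
  rw [extend, hlift, Set.insert_sdiff_singleton, Set.insert_eq_of_mem hcut]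

theorem isTriangulation_extend (hm : 3 ≤ m) {Δ : Set (Sym2 (ZMod m))}
    (hΔ : IsTriangulation m Δ) : IsTriangulation (m + 1) (extend m v Δ) := by
  refine ⟨?_, ?_, fun Δ' hsub hdiag hcross => ?_⟩
  · refine Set.forall_mem_insert.2 ⟨isPolyDiag_cutDiag (by omega) v, ?_⟩
    rintro _ ⟨p, hp, rfl⟩
    exact ((isPolyDiag_iff_map_liftVtx v p).1 (hΔ.1 p hp)).1
  · rintro _ (rfl | ⟨p, hp, rfl⟩) _ (rfl | ⟨q, hq, rfl⟩)
    · exact not_crosses_self _ _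
    · exact not_crosses_cutDiag fun x hx => ne_of_mem_map_liftVtx v hx
    · exact fun h => not_crosses_cutDiag (fun x hx => ne_of_mem_map_liftVtx v hx) h.symm
    · exact (crosses_map_liftVtx_iff v p q).not.2 (hΔ.2.1 p hp q hq)
  refine Set.Subset.antisymm (fun p hp => ?_) hsub
  have hcutΔ' : cutDiag (m + 1) v ∈ Δ' := hsub (Set.mem_insert _ _)
  by_cases hpcut : p = cutDiag (m + 1) v
  · exact hpcut ▸ Set.mem_insert _ _
  have hlift : Sym2.map (liftVtx m v) (Sym2.map (delVtx m v) p) = p :=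
    map_liftVtx_map_delVtx v
      (ne_of_not_crosses_cutDiag (hdiag p hp) (hcross p hp _ hcutΔ'))
  set p' := Sym2.map (delVtx m v) p
  have hp' : IsPolyDiag m p' :=
    (isPolyDiag_iff_map_liftVtx v p').2 ⟨hlift ▸ hdiag p hp, hlift ▸ hpcut⟩
  have hliftΔ' : ∀ q ∈ Δ, Sym2.map (liftVtx m v) q ∈ Δ' :=
    fun q hq => hsub (Set.mem_insert_of_mem _ ⟨q, hq, rfl⟩)
  refine Set.mem_insert_of_mem _ ⟨p', hΔ.mem_of_not_crosses hp' (fun q hq h => ?_)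
    (fun q hq h => ?_), hlift⟩
  · exact hcross p hp _ (hliftΔ' q hq) (hlift ▸ (crosses_map_liftVtx_iff v p' q).2 h)
  · exact hcross _ (hliftΔ' q hq) p hp (hlift ▸ (crosses_map_liftVtx_iff v q p').2 h)

theorem ncard_extensions (hm : 3 ≤ m) {Δ : Set (Sym2 (ZMod m))} (hΔ : IsTriangulation m Δ)
    (S : Set (ZMod (m + 1))) :
    Set.ncard {P : Set (Sym2 (ZMod (m + 1))) × ZMod (m + 1) |
      IsTriangulation (m + 1) P.1 ∧ P.2 ∈ S ∧ cutDiag (m + 1) P.2 ∈ P.1 ∧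
        CloseBorder (m + 1) (cutDiag (m + 1) P.2) ∧ contract m P.2 P.1 = Δ} = S.ncard := by
  have hset : {P : Set (Sym2 (ZMod (m + 1))) × ZMod (m + 1) |
      IsTriangulation (m + 1) P.1 ∧ P.2 ∈ S ∧ cutDiag (m + 1) P.2 ∈ P.1 ∧
        CloseBorder (m + 1) (cutDiag (m + 1) P.2) ∧ contract m P.2 P.1 = Δ} =
      (fun v => (extend m v Δ, v)) '' S := by
    ext ⟨P, v⟩
    constructor
    · rintro ⟨hP, hv, hcut, -, rfl⟩
      exact ⟨v, hv, Prod.ext (eq_extend_contract v hP.1 hP.2.1 hcut).symm rfl⟩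
    · rintro ⟨v, hv, hPv⟩
      obtain ⟨rfl, rfl⟩ := Prod.ext_iff.1 hPv
      exact ⟨isTriangulation_extend v hm hΔ, hv, Set.mem_insert _ _,
        closeBorder_cutDiag (by omega) v, contract_extend v hΔ.1⟩
  rw [hset, Set.ncard_image_of_injective _ fun v w h => congrArg Prod.snd h]

end Extend

theorem insVtx_self (m : ℕ) (a : ZMod m) : insVtx m a a = (a.val : ZMod (m + 1)) :=
  if_pos le_rfl

theorem insVtx_add_one {m : ℕ} [NeZero m] (a : ZMod m) :
    insVtx m a (a + 1) = insVtx m a a + 2 := by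
  rw [insVtx_self, insVtx]
  have ha := ZMod.val_lt a
  by_cases hlast : a.val + 1 < m
  · have hval : (a + 1).val = a.val + 1 := by
      rw [ZMod.val_add_of_lt] <;> rw [ZMod.val_one'' (by omega)]
      exact hlast
    rw [hval, if_neg (by omega)]
    push_cast
    ring
  · have hzero : a + 1 = 0 := by
      rw [← ZMod.natCast_zmod_val a, ← Nat.cast_succ, show a.val.succ = m by omega,
        ZMod.natCast_self]
    have hwrap : ((a.val + 2 : ℕ) : ZMod (m + 1)) = 0 := by
      rw [show a.val + 2 = m + 1 by omega, ZMod.natCast_self]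
    rw [hzero, ZMod.val_zero, if_pos (Nat.zero_le _), Nat.cast_zero, ← hwrap]
    push_cast
    rfl

theorem add_natCast_ne_add_natCast {M : ℕ} (v : ZMod M) {k l : ℕ} (hk : k < M) (hl : l < M)
    (hkl : k ≠ l) : v + k ≠ v + l := by
  rwa [Ne, add_right_inj, ZMod.natCast_eq_natCast_iff', Nat.mod_eq_of_lt hk, Nat.mod_eq_of_lt hl]

theorem ncard_consecutive_three {M : ℕ} (hM : 3 ≤ M) (v : ZMod M) :
    ({v, v + 1, v + 2} : Set (ZMod M)).ncard = 3 := by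
  refine Set.ncard_eq_three.2 ⟨v, v + 1, v + 2, ?_, ?_, ?_, rfl⟩
  · simpa using add_natCast_ne_add_natCast v (k := 0) (l := 1) (by omega) (by omega) (by omega)
  · simpa using add_natCast_ne_add_natCast v (k := 0) (l := 2) (by omega) (by omega) (by omega)
  · simpa using add_natCast_ne_add_natCast v (k := 1) (l := 2) (by omega) (by omega) (by omega)

/-- For any border edge (between `a` and `a+1`) of a triangulated convex `(n+3)`-gon there
are exactly three ways to extend the polygon by one vertex at that edge together with a new
diagonal close to the border, i.e. exactly three pairs of a triangulation of the
`(n+4)`-gon and a close-to-the-border diagonal cutting off the new vertex or one of its two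
neighbours whose contraction recovers `Δ`. -/
theorem three_extensions (n : ℕ) (Δ : Set (Sym2 (ZMod (n + 3)))) (a : ZMod (n + 3))
    (hΔ : IsTriangulation (n + 3) Δ) :
    Set.ncard {P : Set (Sym2 (ZMod (n + 4))) × ZMod (n + 4) |
      IsTriangulation (n + 4) P.1 ∧
      (P.2 = insVtx (n + 3) a a ∨ P.2 = ((a.val + 1 : ℕ) : ZMod (n + 4)) ∨
        P.2 = insVtx (n + 3) a (a + 1)) ∧
      cutDiag (n + 4) P.2 ∈ P.1 ∧ CloseBorder (n + 4) (cutDiag (n + 4) P.2) ∧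
      contract (n + 3) P.2 P.1 = Δ} = 3 := by
  have hnew : ((a.val + 1 : ℕ) : ZMod (n + 4)) = insVtx (n + 3) a a + 1 := by
    rw [insVtx_self]
    push_cast
    rfl
  rw [hnew, insVtx_add_one]
  generalize insVtx (n + 3) a a = v
  exact (ncard_extensions (by omega) hΔ {v, v + 1, v + 2}).trans
    (ncard_consecutive_three (by omega) v)

end CTA
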